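/- arXiv:2212.11630 — 6 statements merged into one kernel-verified Lean document; each statement's English description precedes it below -/
import Mathlib

section
/- Let b : K → R and d : K → D be injective graph morphisms between labelled directed graphs. Define H by: V_H is the disjoint union V_D + (V_R − b_V(V_K)) (realised as the set of inl(v) for v ∈ V_D together with inr(v) for v ∈ V_R − b_V(V_K)); E_H is the disjoint union E_D + (E_R − b_E(E_K)); the source function sends inl(e) to inl(s_D(e)), and sends inr(e) to inl(d_V(b_V⁻¹(s_R(e)))) if s_R(e) ∈ b_V(V_K) and to inr(s_R(e)) otherwise; the target function is defined analogously with t in place of s; the node labelling sends inl(v) to l_D(v) and inr(v) to l_R(v); the edge labelling is analogous with m in place of l. Then H is a well-formed labelled directed graph: its node and edge sets are finite and its source and target functions map each edge of H to a node of H. -/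
/-- A (pre)graph: node set, edge set, source/target functions and labelling
functions for nodes and edges. -/
structure PreGraph (V E X Y : Type) where
  nodes : Set V
  edges : Set E
  src : E → V
  tgt : E → V
  labV : V → X
  labE : E → Y

/-- Well-formedness of a labelled directed graph: finite node and edge sets,
and sources/targets of edges are nodes. -/
structure PreGraph.IsGraph {V E X Y : Type} (G : PreGraph V E X Y) : Prop where
  finite_nodes : G.nodes.Finite
  finite_edges : G.edges.Finite
  src_mem : ∀ e ∈ G.edges, G.src e ∈ G.nodes
  tgt_mem : ∀ e ∈ G.edges, G.tgt e ∈ G.nodes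

/-- A pair of node and edge mappings. -/
structure PreMorph (V₁ E₁ V₂ E₂ : Type) where
  fv : V₁ → V₂
  fe : E₁ → E₂

/-- Componentwise composition of morphisms. -/
def PreMorph.comp {V₁ E₁ V₂ E₂ V₃ E₃ : Type}
    (g : PreMorph V₂ E₂ V₃ E₃) (f : PreMorph V₁ E₁ V₂ E₂) :
    PreMorph V₁ E₁ V₃ E₃ :=
  ⟨g.fv ∘ f.fv, g.fe ∘ f.fe⟩

/-- `f` is a graph morphism from `G` to `H`: it maps nodes to nodes and edges
to edges, preserves sources and targets, and preserves node and edge labels. -/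
structure IsMorphism {V₁ E₁ V₂ E₂ X Y : Type}
    (G : PreGraph V₁ E₁ X Y) (H : PreGraph V₂ E₂ X Y)
    (f : PreMorph V₁ E₁ V₂ E₂) : Prop where
  node_range : ∀ v ∈ G.nodes, f.fv v ∈ H.nodes
  edge_range : ∀ e ∈ G.edges, f.fe e ∈ H.edges
  src_pres : ∀ e ∈ G.edges, f.fv (G.src e) = H.src (f.fe e)
  tgt_pres : ∀ e ∈ G.edges, f.fv (G.tgt e) = H.tgt (f.fe e)
  labV_pres : ∀ v ∈ G.nodes, G.labV v = H.labV (f.fv v)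
  labE_pres : ∀ e ∈ G.edges, G.labE e = H.labE (f.fe e)

/-- An injective graph morphism: a graph morphism whose node and edge
components are injective on the node and edge sets of the domain. -/
structure IsInjMorphism {V₁ E₁ V₂ E₂ X Y : Type}
    (G : PreGraph V₁ E₁ X Y) (H : PreGraph V₂ E₂ X Y)
    (f : PreMorph V₁ E₁ V₂ E₂) extends IsMorphism G H f : Prop where
  injV : Set.InjOn f.fv G.nodes
  injE : Set.InjOn f.fe G.edges

open scoped Classical

/-- The gluing of `D` and `R` according to `d` (for `b : K → R`, `d : K → D`),
with node set `V_D + (V_R − b_V(V_K))` and edge set `E_D + (E_R − b_E(E_K))`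
realised via `Sum.inl`/`Sum.inr`.  Here `bInvV`/`bInvE` denote the inverse of
`b` on its image. -/
noncomputable def Gluing {VK EK VD ED VR ER X Y : Type}
    (K : PreGraph VK EK X Y) (D : PreGraph VD ED X Y) (R : PreGraph VR ER X Y)
    (b : PreMorph VK EK VR ER) (d : PreMorph VK EK VD ED)
    (bInvV : VR → VK) (bInvE : ER → EK) : PreGraph (VD ⊕ VR) (ED ⊕ ER) X Y where
  nodes := Sum.inl '' D.nodes ∪ Sum.inr '' (R.nodes \ b.fv '' K.nodes)
  edges := Sum.inl '' D.edges ∪ Sum.inr '' (R.edges \ b.fe '' K.edges)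
  src := fun e => match e with
    | Sum.inl e => Sum.inl (D.src e)
    | Sum.inr e =>
        if R.src e ∈ b.fv '' K.nodes then Sum.inl (d.fv (bInvV (R.src e)))
        else Sum.inr (R.src e)
  tgt := fun e => match e with
    | Sum.inl e => Sum.inl (D.tgt e)
    | Sum.inr e =>
        if R.tgt e ∈ b.fv '' K.nodes then Sum.inl (d.fv (bInvV (R.tgt e)))
        else Sum.inr (R.tgt e)
  labV := fun v => match v with
    | Sum.inl v => D.labV v
    | Sum.inr v => R.labV v
  labE := fun e => match e with
    | Sum.inl e => D.labE e
    | Sum.inr e => R.labE e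

/-- The morphism `c = (inl, inl) : D → H` of the gluing construction. -/
def GluingC (VD ED VR ER : Type) : PreMorph VD ED (VD ⊕ VR) (ED ⊕ ER) :=
  ⟨Sum.inl, Sum.inl⟩

/-- The morphism `h : R → H` of the gluing construction:
`h(x) = inr x` if `x ∈ R − b(K)`, and `h(x) = inl (d (b⁻¹ x))` otherwise. -/
noncomputable def GluingH {VK EK VD ED VR ER X Y : Type}
    (K : PreGraph VK EK X Y) (R : PreGraph VR ER X Y)
    (b : PreMorph VK EK VR ER) (d : PreMorph VK EK VD ED)
    (bInvV : VR → VK) (bInvE : ER → EK) : PreMorph VR ER (VD ⊕ VR) (ED ⊕ ER) :=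
  ⟨fun v => if v ∈ R.nodes \ b.fv '' K.nodes then Sum.inr v
            else Sum.inl (d.fv (bInvV v)),
   fun e => if e ∈ R.edges \ b.fe '' K.edges then Sum.inr e
            else Sum.inl (d.fe (bInvE e))⟩

namespace Gluing

variable {VK EK VD ED VR ER X Y : Type}
  {K : PreGraph VK EK X Y} {D : PreGraph VD ED X Y} {R : PreGraph VR ER X Y}
  {b : PreMorph VK EK VR ER} {d : PreMorph VK EK VD ED}
  {bInvV : VR → VK} {bInvE : ER → EK}

/-- `(Gluing K D R b d bInvV bInvE).src (Sum.inr e)` is definitionally `node K b d bInvV (R.src e)`,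
and likewise for `tgt`. -/
noncomputable def node (K : PreGraph VK EK X Y) (b : PreMorph VK EK VR ER)
    (d : PreMorph VK EK VD ED) (bInvV : VR → VK) (v : VR) : VD ⊕ VR :=
  if v ∈ b.fv '' K.nodes then Sum.inl (d.fv (bInvV v)) else Sum.inr v

theorem nodes_finite (hD : D.nodes.Finite) (hR : R.nodes.Finite) :
    (Gluing K D R b d bInvV bInvE).nodes.Finite :=
  (hD.image _).union (hR.sdiff.image _)

theorem edges_finite (hD : D.edges.Finite) (hR : R.edges.Finite) :
    (Gluing K D R b d bInvV bInvE).edges.Finite :=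
  (hD.image _).union (hR.sdiff.image _)

theorem node_mem_nodes (hd : Set.MapsTo d.fv K.nodes D.nodes)
    (hInvV : Set.LeftInvOn bInvV b.fv K.nodes) {v : VR} (hv : v ∈ R.nodes) :
    node K b d bInvV v ∈ (Gluing K D R b d bInvV bInvE).nodes := by
  unfold node
  split_ifs with hvK
  · obtain ⟨k, hk, rfl⟩ := hvK
    exact Or.inl ⟨d.fv k, hd hk, by rw [hInvV hk]⟩
  · exact Or.inr ⟨v, ⟨hv, hvK⟩, rfl⟩

end Gluing

theorem gluing_isGraph_general {VK EK VD ED VR ER X Y : Type}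
    (K : PreGraph VK EK X Y) (D : PreGraph VD ED X Y) (R : PreGraph VR ER X Y)
    (b : PreMorph VK EK VR ER) (d : PreMorph VK EK VD ED)
    (hD : D.IsGraph) (hR : R.IsGraph)
    (hd : IsInjMorphism K D d)
    (bInvV : VR → VK) (bInvE : ER → EK)
    (hInvV : ∀ v ∈ K.nodes, bInvV (b.fv v) = v) :
    (Gluing K D R b d bInvV bInvE).IsGraph := by
  refine ⟨Gluing.nodes_finite hD.finite_nodes hR.finite_nodes,
    Gluing.edges_finite hD.finite_edges hR.finite_edges, ?_, ?_⟩
  · rintro _ (⟨e, he, rfl⟩ | ⟨e, he, rfl⟩)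
    · exact Or.inl ⟨D.src e, hD.src_mem e he, rfl⟩
    · exact Gluing.node_mem_nodes hd.node_range hInvV (hR.src_mem e he.1)
  · rintro _ (⟨e, he, rfl⟩ | ⟨e, he, rfl⟩)
    · exact Or.inl ⟨D.tgt e, hD.tgt_mem e he, rfl⟩
    · exact Gluing.node_mem_nodes hd.node_range hInvV (hR.tgt_mem e he.1)

/-- the gluing of `D` and `R` according to `d` is a well-formed
labelled directed graph. -/
theorem gluing_isGraph {VK EK VD ED VR ER X Y : Type}
    (K : PreGraph VK EK X Y) (D : PreGraph VD ED X Y) (R : PreGraph VR ER X Y)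
    (b : PreMorph VK EK VR ER) (d : PreMorph VK EK VD ED)
    (hK : K.IsGraph) (hD : D.IsGraph) (hR : R.IsGraph)
    (hb : IsInjMorphism K R b) (hd : IsInjMorphism K D d)
    (bInvV : VR → VK) (bInvE : ER → EK)
    (hInvV : ∀ v ∈ K.nodes, bInvV (b.fv v) = v)
    (hInvE : ∀ e ∈ K.edges, bInvE (b.fe e) = e) :
    (Gluing K D R b d bInvV bInvE).IsGraph :=
  gluing_isGraph_general K D R b d hD hR hd bInvV bInvE hInvV
end

section
/- Let b : K → R and d : K → D be injective graph morphisms between labelled directed graphs, and let H be the gluing of D and R according to d. Define h : R → H on nodes by h_V(v) = inr(v) if v ∈ V_R − b_V(V_K) and h_V(v) = inl(d_V(b_V⁻¹(v))) otherwise, and on edges by h_E(e) = inr(e) if e ∈ E_R − b_E(E_K) and h_E(e) = inl(d_E(b_E⁻¹(e))) otherwise. Then h is an injective graph morphism from R to H. -/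
open scoped Classical

/-- the mapping `h` (with `h(x) = inr x` if `x ∈ R − b(K)` and
`h(x) = inl (d (b⁻¹ x))` otherwise) is an injective graph morphism from `R`
to the gluing `H` of `D` and `R` according to `d`. -/
theorem gluingH_isInjMorphism {VK EK VD ED VR ER X Y : Type}
    (K : PreGraph VK EK X Y) (D : PreGraph VD ED X Y) (R : PreGraph VR ER X Y)
    (b : PreMorph VK EK VR ER) (d : PreMorph VK EK VD ED)
    (hK : K.IsGraph) (hD : D.IsGraph) (hR : R.IsGraph)
    (hb : IsInjMorphism K R b) (hd : IsInjMorphism K D d)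
    (bInvV : VR → VK) (bInvE : ER → EK)
    (hInvV : ∀ v ∈ K.nodes, bInvV (b.fv v) = v)
    (hInvE : ∀ e ∈ K.edges, bInvE (b.fe e) = e) :
    IsInjMorphism R (Gluing K D R b d bInvV bInvE)
      (GluingH K R b d bInvV bInvE) := by
  set h := GluingH K R b d bInvV bInvE with hh
  have hfv_in : ∀ k ∈ K.nodes, h.fv (b.fv k) = Sum.inl (d.fv k) := by
    intro k hk
    simp only [hh, GluingH, Set.mem_diff]
    rw [if_neg (fun hc => hc.2 ⟨k, hk, rfl⟩), hInvV k hk]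
  have hfv_out : ∀ v, v ∈ R.nodes → v ∉ b.fv '' K.nodes → h.fv v = Sum.inr v := by
    intro v hv hnv
    simp only [hh, GluingH]
    rw [if_pos ⟨hv, hnv⟩]
  have hfe_in : ∀ k ∈ K.edges, h.fe (b.fe k) = Sum.inl (d.fe k) := by
    intro k hk
    simp only [hh, GluingH, Set.mem_diff]
    rw [if_neg (fun hc => hc.2 ⟨k, hk, rfl⟩), hInvE k hk]
  have hfe_out : ∀ e, e ∈ R.edges → e ∉ b.fe '' K.edges → h.fe e = Sum.inr e := by
    intro e he hne
    simp only [hh, GluingH]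
    rw [if_pos ⟨he, hne⟩]
  have hsrc : ∀ e ∈ R.edges, h.fv (R.src e) =
      (Gluing K D R b d bInvV bInvE).src (h.fe e) ∧
      h.fv (R.tgt e) = (Gluing K D R b d bInvV bInvE).tgt (h.fe e) := by
    intro e he
    by_cases hme : e ∈ b.fe '' K.edges
    · obtain ⟨k, hk, rfl⟩ := hme
      rw [hfe_in k hk]
      have hs : R.src (b.fe k) = b.fv (K.src k) := (hb.src_pres k hk).symm
      have ht : R.tgt (b.fe k) = b.fv (K.tgt k) := (hb.tgt_pres k hk).symm
      rw [hs, ht, hfv_in _ (hK.src_mem k hk), hfv_in _ (hK.tgt_mem k hk)]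
      simp only [Gluing]
      exact ⟨congrArg _ (hd.src_pres k hk), congrArg _ (hd.tgt_pres k hk)⟩
    · rw [hfe_out e he hme]
      simp only [Gluing]
      constructor
      · by_cases hms : R.src e ∈ b.fv '' K.nodes
        · rw [if_pos hms]
          simp only [hh, GluingH, Set.mem_diff]
          rw [if_neg (fun hc => hc.2 hms)]
        · rw [if_neg hms, hfv_out _ (hR.src_mem e he) hms]
      · by_cases hmt : R.tgt e ∈ b.fv '' K.nodes
        · rw [if_pos hmt]
          simp only [hh, GluingH, Set.mem_diff]
          rw [if_neg (fun hc => hc.2 hmt)]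
        · rw [if_neg hmt, hfv_out _ (hR.tgt_mem e he) hmt]
  refine ⟨⟨?_, ?_, ?_, ?_, ?_, ?_⟩, ?_, ?_⟩
  · -- node_range
    intro v hv
    by_cases hm : v ∈ b.fv '' K.nodes
    · obtain ⟨k, hk, rfl⟩ := hm
      rw [hfv_in k hk]
      exact Or.inl ⟨d.fv k, hd.node_range k hk, rfl⟩
    · rw [hfv_out v hv hm]
      exact Or.inr ⟨v, ⟨hv, hm⟩, rfl⟩
  · -- edge_range
    intro e he
    by_cases hm : e ∈ b.fe '' K.edges
    · obtain ⟨k, hk, rfl⟩ := hm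
      rw [hfe_in k hk]
      exact Or.inl ⟨d.fe k, hd.edge_range k hk, rfl⟩
    · rw [hfe_out e he hm]
      exact Or.inr ⟨e, ⟨he, hm⟩, rfl⟩
  · exact fun e he => (hsrc e he).1
  · exact fun e he => (hsrc e he).2
  · -- labV
    intro v hv
    by_cases hm : v ∈ b.fv '' K.nodes
    · obtain ⟨k, hk, rfl⟩ := hm
      rw [hfv_in k hk]
      simp only [Gluing]
      rw [← hd.labV_pres k hk, ← hb.labV_pres k hk]
    · rw [hfv_out v hv hm]; rfl
  · -- labE
    intro e he
    by_cases hm : e ∈ b.fe '' K.edges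
    · obtain ⟨k, hk, rfl⟩ := hm
      rw [hfe_in k hk]
      simp only [Gluing]
      rw [← hd.labE_pres k hk, ← hb.labE_pres k hk]
    · rw [hfe_out e he hm]; rfl
  · -- injV
    intro v1 h1 v2 h2 heq
    by_cases hm1 : v1 ∈ b.fv '' K.nodes <;> by_cases hm2 : v2 ∈ b.fv '' K.nodes
    · obtain ⟨k1, hk1, rfl⟩ := hm1
      obtain ⟨k2, hk2, rfl⟩ := hm2
      rw [hfv_in k1 hk1, hfv_in k2 hk2] at heq
      exact congrArg b.fv (hd.injV hk1 hk2 (Sum.inl_injective heq))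
    · obtain ⟨k1, hk1, rfl⟩ := hm1
      rw [hfv_in k1 hk1, hfv_out v2 h2 hm2] at heq
      exact absurd heq (by simp)
    · obtain ⟨k2, hk2, rfl⟩ := hm2
      rw [hfv_out v1 h1 hm1, hfv_in k2 hk2] at heq
      exact absurd heq (by simp)
    · rw [hfv_out v1 h1 hm1, hfv_out v2 h2 hm2] at heq
      exact Sum.inr_injective heq
  · -- injE
    intro e1 h1 e2 h2 heq
    by_cases hm1 : e1 ∈ b.fe '' K.edges <;> by_cases hm2 : e2 ∈ b.fe '' K.edges
    · obtain ⟨k1, hk1, rfl⟩ := hm1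
      obtain ⟨k2, hk2, rfl⟩ := hm2
      rw [hfe_in k1 hk1, hfe_in k2 hk2] at heq
      exact congrArg b.fe (hd.injE hk1 hk2 (Sum.inl_injective heq))
    · obtain ⟨k1, hk1, rfl⟩ := hm1
      rw [hfe_in k1 hk1, hfe_out e2 h2 hm2] at heq
      exact absurd heq (by simp)
    · obtain ⟨k2, hk2, rfl⟩ := hm2
      rw [hfe_out e1 h1 hm1, hfe_in k2 hk2] at heq
      exact absurd heq (by simp)
    · rw [hfe_out e1 h1 hm1, hfe_out e2 h2 hm2] at heq
      exact Sum.inr_injective heq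
end

section
/- (Gluings are pushouts.) Let b : K → R and d : K → D be injective graph morphisms between labelled directed graphs, let H be the gluing of D and R according to d, let c : D → H be the morphism (inl, inl), and let h : R → H be defined by h(x) = inr(x) if x ∈ R − b(K) and h(x) = inl(d(b⁻¹(x))) otherwise. Then the square formed by b, d, h, c is a pushout: (i) h ∘ b and c ∘ d agree on all nodes and edges of K, and (ii) for every labelled directed graph H′ and graph morphisms p : R → H′, t : D → H′ with p ∘ b = t ∘ d on the nodes and edges of K, there exists a graph morphism u : H → H′ with u ∘ h = p on the nodes and edges of R and u ∘ c = t on the nodes and edges of D, and any two such morphisms u agree on all nodes and edges of H. -/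
open scoped Classical

/-- `(P, f, g)` is a pushout of `b : A → B` and `c : A → C`:
the square commutes on the nodes and edges of `A`, and for every graph `H'`
and morphisms `p : B → H'`, `t : C → H'` commuting with `b` and `c` there is
a morphism `u : P → H'` with `u ∘ f = p` on `B` and `u ∘ g = t` on `C`,
and any two such morphisms agree on the nodes and edges of `P`. -/
def IsPushout {VA EA VB EB VC EC VP EP X Y : Type}
    (A : PreGraph VA EA X Y) (B : PreGraph VB EB X Y)
    (C : PreGraph VC EC X Y) (P : PreGraph VP EP X Y)
    (b : PreMorph VA EA VB EB) (c : PreMorph VA EA VC EC)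
    (f : PreMorph VB EB VP EP) (g : PreMorph VC EC VP EP) : Prop :=
  (∀ v ∈ A.nodes, f.fv (b.fv v) = g.fv (c.fv v)) ∧
  (∀ e ∈ A.edges, f.fe (b.fe e) = g.fe (c.fe e)) ∧
  ∀ (V' E' : Type) (H' : PreGraph V' E' X Y)
    (p : PreMorph VB EB V' E') (t : PreMorph VC EC V' E'),
    H'.IsGraph → IsMorphism B H' p → IsMorphism C H' t →
    (∀ v ∈ A.nodes, p.fv (b.fv v) = t.fv (c.fv v)) →
    (∀ e ∈ A.edges, p.fe (b.fe e) = t.fe (c.fe e)) →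
    (∃ u : PreMorph VP EP V' E',
      IsMorphism P H' u ∧
      (∀ v ∈ B.nodes, u.fv (f.fv v) = p.fv v) ∧
      (∀ e ∈ B.edges, u.fe (f.fe e) = p.fe e) ∧
      (∀ v ∈ C.nodes, u.fv (g.fv v) = t.fv v) ∧
      (∀ e ∈ C.edges, u.fe (g.fe e) = t.fe e)) ∧
    (∀ u u' : PreMorph VP EP V' E',
      (IsMorphism P H' u ∧
       (∀ v ∈ B.nodes, u.fv (f.fv v) = p.fv v) ∧
       (∀ e ∈ B.edges, u.fe (f.fe e) = p.fe e) ∧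
       (∀ v ∈ C.nodes, u.fv (g.fv v) = t.fv v) ∧
       (∀ e ∈ C.edges, u.fe (g.fe e) = t.fe e)) →
      (IsMorphism P H' u' ∧
       (∀ v ∈ B.nodes, u'.fv (f.fv v) = p.fv v) ∧
       (∀ e ∈ B.edges, u'.fe (f.fe e) = p.fe e) ∧
       (∀ v ∈ C.nodes, u'.fv (g.fv v) = t.fv v) ∧
       (∀ e ∈ C.edges, u'.fe (g.fe e) = t.fe e)) →
      (∀ v ∈ P.nodes, u.fv v = u'.fv v) ∧ (∀ e ∈ P.edges, u.fe e = u'.fe e))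

/-- Gluings are pushouts: the square formed by `b : K → R`,
`d : K → D`, `h : R → H` and `c : D → H`, where `H` is the gluing of `D` and
`R` according to `d`, is a pushout. -/
theorem gluing_isPushout {VK EK VD ED VR ER X Y : Type}
    (K : PreGraph VK EK X Y) (D : PreGraph VD ED X Y) (R : PreGraph VR ER X Y)
    (b : PreMorph VK EK VR ER) (d : PreMorph VK EK VD ED)
    (hK : K.IsGraph) (hD : D.IsGraph) (hR : R.IsGraph)
    (hb : IsInjMorphism K R b) (hd : IsInjMorphism K D d)
    (bInvV : VR → VK) (bInvE : ER → EK)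
    (hInvV : ∀ v ∈ K.nodes, bInvV (b.fv v) = v)
    (hInvE : ∀ e ∈ K.edges, bInvE (b.fe e) = e) :
    IsPushout K R D (Gluing K D R b d bInvV bInvE) b d
      (GluingH K R b d bInvV bInvE) (GluingC VD ED VR ER) := by
  classical
  have hbv : ∀ v ∈ K.nodes,
      (GluingH K R b d bInvV bInvE).fv (b.fv v) = Sum.inl (d.fv v) := by
    intro v hv
    simp only [GluingH]
    rw [if_neg (fun h => h.2 ⟨v, hv, rfl⟩), hInvV v hv]
  have hbe : ∀ e ∈ K.edges,
      (GluingH K R b d bInvV bInvE).fe (b.fe e) = Sum.inl (d.fe e) := by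
    intro e he
    simp only [GluingH]
    rw [if_neg (fun h => h.2 ⟨e, he, rfl⟩), hInvE e he]
  refine ⟨fun v hv => hbv v hv, fun e he => hbe e he, ?_⟩
  intro V' E' H' p t hH' hp ht hcomV hcomE
  constructor
  · -- existence
    refine ⟨⟨Sum.elim t.fv p.fv, Sum.elim t.fe p.fe⟩, ?_, ?_, ?_, ?_, ?_⟩
    · constructor
      · rintro v (⟨x, hx, rfl⟩ | ⟨x, hx, rfl⟩)
        · exact ht.node_range x hx
        · exact hp.node_range x hx.1
      · rintro e (⟨x, hx, rfl⟩ | ⟨x, hx, rfl⟩)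
        · exact ht.edge_range x hx
        · exact hp.edge_range x hx.1
      · rintro e (⟨x, hx, rfl⟩ | ⟨x, hx, rfl⟩)
        · exact ht.src_pres x hx
        · simp only [Gluing]
          by_cases h : R.src x ∈ b.fv '' K.nodes
          · rw [if_pos h]
            obtain ⟨k, hk, hkeq⟩ := h
            have : bInvV (R.src x) = k := by rw [← hkeq, hInvV k hk]
            rw [this]
            simp only [Sum.elim_inl, Sum.elim_inr]
            rw [← hcomV k hk, hkeq]
            exact hp.src_pres x hx.1
          · rw [if_neg h]
            exact hp.src_pres x hx.1
      · rintro e (⟨x, hx, rfl⟩ | ⟨x, hx, rfl⟩)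
        · exact ht.tgt_pres x hx
        · simp only [Gluing]
          by_cases h : R.tgt x ∈ b.fv '' K.nodes
          · rw [if_pos h]
            obtain ⟨k, hk, hkeq⟩ := h
            have : bInvV (R.tgt x) = k := by rw [← hkeq, hInvV k hk]
            rw [this]
            simp only [Sum.elim_inl, Sum.elim_inr]
            rw [← hcomV k hk, hkeq]
            exact hp.tgt_pres x hx.1
          · rw [if_neg h]
            exact hp.tgt_pres x hx.1
      · rintro v (⟨x, hx, rfl⟩ | ⟨x, hx, rfl⟩)
        · exact ht.labV_pres x hx
        · exact hp.labV_pres x hx.1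
      · rintro e (⟨x, hx, rfl⟩ | ⟨x, hx, rfl⟩)
        · exact ht.labE_pres x hx
        · exact hp.labE_pres x hx.1
    · intro v hv
      simp only [GluingH]
      by_cases h : v ∈ R.nodes \ b.fv '' K.nodes
      · rw [if_pos h]; rfl
      · rw [if_neg h]
        have hmem : v ∈ b.fv '' K.nodes := by
          by_contra hc; exact h ⟨hv, hc⟩
        obtain ⟨k, hk, rfl⟩ := hmem
        rw [hInvV k hk]
        simp only [Sum.elim_inl]
        exact (hcomV k hk).symm
    · intro e he
      simp only [GluingH]
      by_cases h : e ∈ R.edges \ b.fe '' K.edges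
      · rw [if_pos h]; rfl
      · rw [if_neg h]
        have hmem : e ∈ b.fe '' K.edges := by
          by_contra hc; exact h ⟨he, hc⟩
        obtain ⟨k, hk, rfl⟩ := hmem
        rw [hInvE k hk]
        simp only [Sum.elim_inl]
        exact (hcomE k hk).symm
    · intro v hv; rfl
    · intro e he; rfl
  · -- uniqueness
    rintro u u' ⟨_, hu1, hu2, hu3, hu4⟩ ⟨_, hu1', hu2', hu3', hu4'⟩
    constructor
    · rintro v (⟨x, hx, rfl⟩ | ⟨x, hx, rfl⟩)
      · rw [show (Sum.inl x : VD ⊕ VR) = (GluingC VD ED VR ER).fv x from rfl,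
          hu3 x hx, hu3' x hx]
      · have hh : (GluingH K R b d bInvV bInvE).fv x = Sum.inr x := by
          simp only [GluingH]; rw [if_pos hx]
        rw [← hh, hu1 x hx.1, hu1' x hx.1]
    · rintro e (⟨x, hx, rfl⟩ | ⟨x, hx, rfl⟩)
      · rw [show (Sum.inl x : ED ⊕ ER) = (GluingC VD ED VR ER).fe x from rfl,
          hu4 x hx, hu4' x hx]
      · have hh : (GluingH K R b d bInvV bInvE).fe x = Sum.inr x := by
          simp only [GluingH]; rw [if_pos hx]
        rw [← hh, hu2 x hx.1, hu2' x hx.1]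
end

section
/- Let b′ : K → L and g : L → G be injective graph morphisms between labelled directed graphs such that g satisfies the dangling condition. Define V_D = V_G − g_V(V_L − b′_V(V_K)) and E_D = E_G − g_E(E_L − b′_E(E_K)), and let D be obtained from G by restricting the node set to V_D and the edge set to E_D (keeping the source, target and labelling functions of G). Then D is a well-formed labelled directed graph: V_D and E_D are finite, and for every e ∈ E_D both s_G(e) ∈ V_D and t_G(e) ∈ V_D. -/
/-- The dangling condition for `g : L → G` relative to `b' : K → L`:
no edge in `E_G − g_E(E_L)` is incident to a node in `g_V(V_L − b'_V(V_K))`. -/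
def Dangling {VK EK VL EL VG EG X Y : Type}
    (K : PreGraph VK EK X Y) (L : PreGraph VL EL X Y) (G : PreGraph VG EG X Y)
    (b' : PreMorph VK EK VL EL) (g : PreMorph VL EL VG EG) : Prop :=
  ∀ e ∈ G.edges \ g.fe '' L.edges,
    G.src e ∉ g.fv '' (L.nodes \ b'.fv '' K.nodes) ∧
    G.tgt e ∉ g.fv '' (L.nodes \ b'.fv '' K.nodes)

/-- The deletion of `L` and `G` according to `g`: the subgraph of `G` with
`V_D = V_G − g_V(V_L − b'_V(V_K))` and `E_D = E_G − g_E(E_L − b'_E(E_K))`,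
with source, target and labelling functions inherited from `G`. -/
def Deletion {VK EK VL EL VG EG X Y : Type}
    (K : PreGraph VK EK X Y) (L : PreGraph VL EL X Y) (G : PreGraph VG EG X Y)
    (b' : PreMorph VK EK VL EL) (g : PreMorph VL EL VG EG) :
    PreGraph VG EG X Y :=
  { G with
    nodes := G.nodes \ g.fv '' (L.nodes \ b'.fv '' K.nodes)
    edges := G.edges \ g.fe '' (L.edges \ b'.fe '' K.edges) }

/-
An edge kept in the deletion either lies outside `g(L)`, and then the dangling condition keeps
its endpoints, or it is the image of an edge of `K` under `g ∘ b'`; its endpoints are then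
images of nodes of `K`, which injectivity of `g` on `V_L` keeps apart from the deleted nodes
`g(V_L − b'(V_K))`.
-/

theorem Set.InjOn.notMem_image_sdiff_of_mem_image {α β : Type*} {f : α → β} {s t : Set α}
    {b : β} (hf : s.InjOn f) (hts : t ⊆ s) (hb : b ∈ f '' t) : b ∉ f '' (s \ t) := by
  rw [hf.image_sdiff_subset hts]
  exact fun h => h.2 hb

section Morphism

variable {V₁ E₁ V₂ E₂ V₃ E₃ X Y : Type}
  {G : PreGraph V₁ E₁ X Y} {H : PreGraph V₂ E₂ X Y} {I : PreGraph V₃ E₃ X Y}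
  {f : PreMorph V₁ E₁ V₂ E₂} {g : PreMorph V₂ E₂ V₃ E₃}

theorem IsMorphism.comp (hg : IsMorphism H I g) (hf : IsMorphism G H f) :
    IsMorphism G I (g.comp f) where
  node_range v hv := hg.node_range _ (hf.node_range v hv)
  edge_range e he := hg.edge_range _ (hf.edge_range e he)
  src_pres e he := by
    simp only [PreMorph.comp, Function.comp_apply, hf.src_pres e he,
      hg.src_pres _ (hf.edge_range e he)]
  tgt_pres e he := by
    simp only [PreMorph.comp, Function.comp_apply, hf.tgt_pres e he,
      hg.tgt_pres _ (hf.edge_range e he)]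
  labV_pres v hv := (hf.labV_pres v hv).trans (hg.labV_pres _ (hf.node_range v hv))
  labE_pres e he := (hf.labE_pres e he).trans (hg.labE_pres _ (hf.edge_range e he))

theorem IsMorphism.src_mem_image_nodes (hf : IsMorphism G H f) (hG : G.IsGraph) {e : E₁}
    (he : e ∈ G.edges) : H.src (f.fe e) ∈ f.fv '' G.nodes :=
  ⟨G.src e, hG.src_mem e he, hf.src_pres e he⟩

theorem IsMorphism.tgt_mem_image_nodes (hf : IsMorphism G H f) (hG : G.IsGraph) {e : E₁}
    (he : e ∈ G.edges) : H.tgt (f.fe e) ∈ f.fv '' G.nodes :=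
  ⟨G.tgt e, hG.tgt_mem e he, hf.tgt_pres e he⟩

end Morphism

theorem Deletion.endpoints_notMem_deleted_nodes {VK EK VL EL VG EG X Y : Type}
    {K : PreGraph VK EK X Y} {L : PreGraph VL EL X Y} {G : PreGraph VG EG X Y}
    {b' : PreMorph VK EK VL EL} {g : PreMorph VL EL VG EG}
    (hK : K.IsGraph) (hb' : IsInjMorphism K L b') (hg : IsInjMorphism L G g)
    (hdang : Dangling K L G b' g) {e : EG} (he : e ∈ (Deletion K L G b' g).edges) :
    G.src e ∉ g.fv '' (L.nodes \ b'.fv '' K.nodes) ∧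
      G.tgt e ∉ g.fv '' (L.nodes \ b'.fv '' K.nodes) := by
  obtain ⟨heG, he_kept⟩ := he
  by_cases heL : e ∈ g.fe '' L.edges
  · obtain ⟨e', he'L, rfl⟩ := heL
    obtain ⟨k, hk, rfl⟩ : e' ∈ b'.fe '' K.edges := by
      by_contra h
      exact he_kept ⟨e', ⟨he'L, h⟩, rfl⟩
    have hKL : b'.fv '' K.nodes ⊆ L.nodes := Set.image_subset_iff.2 hb'.node_range
    have hgb := hg.comp hb'.toIsMorphism
    have hcomp := (Set.image_comp g.fv b'.fv K.nodes).subset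
    exact ⟨hg.injV.notMem_image_sdiff_of_mem_image hKL (hcomp (hgb.src_mem_image_nodes hK hk)),
      hg.injV.notMem_image_sdiff_of_mem_image hKL (hcomp (hgb.tgt_mem_image_nodes hK hk))⟩
  · exact hdang e ⟨heG, heL⟩

theorem deletion_isGraph_general {VK EK VL EL VG EG X Y : Type}
    (K : PreGraph VK EK X Y) (L : PreGraph VL EL X Y) (G : PreGraph VG EG X Y)
    (b' : PreMorph VK EK VL EL) (g : PreMorph VL EL VG EG)
    (hK : K.IsGraph) (hG : G.IsGraph)
    (hb' : IsInjMorphism K L b') (hg : IsInjMorphism L G g)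
    (hdang : Dangling K L G b' g) :
    (Deletion K L G b' g).IsGraph := by
  have kept := fun e (he : e ∈ (Deletion K L G b' g).edges) =>
    Deletion.endpoints_notMem_deleted_nodes hK hb' hg hdang he
  exact ⟨hG.finite_nodes.sdiff, hG.finite_edges.sdiff,
    fun e he => ⟨hG.src_mem e he.1, (kept e he).1⟩,
    fun e he => ⟨hG.tgt_mem e he.1, (kept e he).2⟩⟩

/-- the deletion of `L` and `G` according to `g` is a well-formed
labelled directed graph. -/
theorem deletion_isGraph {VK EK VL EL VG EG X Y : Type}
    (K : PreGraph VK EK X Y) (L : PreGraph VL EL X Y) (G : PreGraph VG EG X Y)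
    (b' : PreMorph VK EK VL EL) (g : PreMorph VL EL VG EG)
    (hK : K.IsGraph) (hL : L.IsGraph) (hG : G.IsGraph)
    (hb' : IsInjMorphism K L b') (hg : IsInjMorphism L G g)
    (hdang : Dangling K L G b' g) :
    (Deletion K L G b' g).IsGraph :=
  deletion_isGraph_general K L G b' g hK hG hb' hg hdang
end

section
/- Let b′ : K → L and g : L → G be injective graph morphisms between labelled directed graphs such that g satisfies the dangling condition, and let D be the deletion of L and G according to g, i.e. the subgraph of G with V_D = V_G − g_V(V_L − b′_V(V_K)) and E_D = E_G − g_E(E_L − b′_E(E_K)). Then d = g ∘ b′, given by d_V = g_V ∘ b′_V and d_E = g_E ∘ b′_E, is an injective graph morphism from K to D; in particular, d maps every node of K into V_D and every edge of K into E_D. -/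
/-- `d = g ∘ b'` is an injective graph morphism from `K` to the
deletion `D` of `L` and `G` according to `g`; in particular it maps nodes of
`K` into `V_D` and edges of `K` into `E_D`. -/
theorem deletion_d_isInjMorphism {VK EK VL EL VG EG X Y : Type}
    (K : PreGraph VK EK X Y) (L : PreGraph VL EL X Y) (G : PreGraph VG EG X Y)
    (b' : PreMorph VK EK VL EL) (g : PreMorph VL EL VG EG)
    (hK : K.IsGraph) (hL : L.IsGraph) (hG : G.IsGraph)
    (hb' : IsInjMorphism K L b') (hg : IsInjMorphism L G g)
    (hdang : Dangling K L G b' g) :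
    IsInjMorphism K (Deletion K L G b' g) (g.comp b') := by
  have hnode : ∀ v ∈ K.nodes, (g.comp b').fv v ∈ (Deletion K L G b' g).nodes := by
    intro v hv
    refine ⟨hg.node_range _ (hb'.node_range v hv), ?_⟩
    rintro ⟨w, ⟨hwL, hwK⟩, hw⟩
    exact hwK ⟨v, hv, (hg.injV hwL (hb'.node_range v hv) hw).symm⟩
  have hedge : ∀ e ∈ K.edges, (g.comp b').fe e ∈ (Deletion K L G b' g).edges := by
    intro e he
    refine ⟨hg.edge_range _ (hb'.edge_range e he), ?_⟩
    rintro ⟨w, ⟨hwL, hwK⟩, hw⟩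
    exact hwK ⟨e, he, (hg.injE hwL (hb'.edge_range e he) hw).symm⟩
  refine ⟨⟨hnode, hedge, ?_, ?_, ?_, ?_⟩, ?_, ?_⟩
  · intro e he
    show g.fv (b'.fv (K.src e)) = G.src (g.fe (b'.fe e))
    rw [hb'.src_pres e he, hg.src_pres _ (hb'.edge_range e he)]
  · intro e he
    show g.fv (b'.fv (K.tgt e)) = G.tgt (g.fe (b'.fe e))
    rw [hb'.tgt_pres e he, hg.tgt_pres _ (hb'.edge_range e he)]
  · intro v hv
    show K.labV v = G.labV (g.fv (b'.fv v))
    rw [hb'.labV_pres v hv, hg.labV_pres _ (hb'.node_range v hv)]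
  · intro e he
    show K.labE e = G.labE (g.fe (b'.fe e))
    rw [hb'.labE_pres e he, hg.labE_pres _ (hb'.edge_range e he)]
  · intro a ha b hb h
    exact hb'.injV ha hb
      (hg.injV (hb'.node_range a ha) (hb'.node_range b hb) h)
  · intro a ha b hb h
    exact hb'.injE ha hb
      (hg.injE (hb'.edge_range a ha) (hb'.edge_range b hb) h)
end

section
/- (Direct derivations are double pushouts.) Let r = (L ← K → R) be a rule, i.e. labelled directed graphs L, K, R with inclusion graph morphisms b′ : K → L and b : K → R, and let g : L → G be an injective graph morphism satisfying the dangling condition. Let D be the deletion of L and G according to g (the subgraph of G with V_D = V_G − g_V(V_L − b′_V(V_K)) and E_D = E_G − g_E(E_L − b′_E(E_K))), let d : K → D be the restriction of g to K and D, and let H be the gluing of D and R according to d, with morphisms h : R → H and c : D → H as in the gluing construction. Then both squares of the resulting diagram are pushouts: (1) the square with morphisms b′ : K → L, d : K → D, g : L → G and the inclusion c′ : D → G is a pushout, and (2) the square with morphisms b : K → R, d : K → D, h : R → H and c : D → H is a pushout. -/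
open scoped Classical

/-- Direct derivations are double pushouts: for a rule
`(L ← K → R)` with inclusions `b' : K → L`, `b : K → R` and an injective
match `g : L → G` satisfying the dangling condition, with `D` the deletion of
`L` and `G` according to `g`, `d = g ∘ b' : K → D` the restriction of `g`,
and `H` the gluing of `D` and `R` according to `d` (with morphisms `h` and
`c` as in the gluing construction; since `b` is an inclusion its inverse on
its image is the identity), both squares are pushouts. -/
theorem direct_derivation_double_pushout {V E X Y : Type}
    (K L R G : PreGraph V E X Y)
    (b' b : PreMorph V E V E) (g : PreMorph V E V E)
    (hK : K.IsGraph) (hL : L.IsGraph) (hR : R.IsGraph) (hG : G.IsGraph)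
    (hb' : IsMorphism K L b')
    (hb'V : ∀ v ∈ K.nodes, b'.fv v = v) (hb'E : ∀ e ∈ K.edges, b'.fe e = e)
    (hb : IsMorphism K R b)
    (hbV : ∀ v ∈ K.nodes, b.fv v = v) (hbE : ∀ e ∈ K.edges, b.fe e = e)
    (hg : IsInjMorphism L G g)
    (hdang : Dangling K L G b' g) :
    IsPushout K L (Deletion K L G b' g) G b' (g.comp b') g
      (⟨id, id⟩ : PreMorph V E V E) ∧
    IsPushout K R (Deletion K L G b' g)
      (Gluing K (Deletion K L G b' g) R b (g.comp b') id id)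
      b (g.comp b') (GluingH K R b (g.comp b') id id)
      (GluingC V E V E) := by
  classical
  obtain ⟨⟨gvR, geR, gsrc, gtgt, glabV, glabE⟩, ginjV, ginjE⟩ := hg
  constructor
  · -- Square 1
    refine ⟨fun v _ => rfl, fun e _ => rfl, ?_⟩
    intro V' E' H' p t hH' hp ht hcomV hcomE
    -- the mediating morphism
    let uV : V → V' := fun v =>
      if hv : ∃ x, x ∈ L.nodes ∧ g.fv x = v then p.fv hv.choose else t.fv v
    let uE : E → E' := fun e =>
      if he : ∃ x, x ∈ L.edges ∧ g.fe x = e then p.fe he.choose else t.fe e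
    have huVg : ∀ w ∈ L.nodes, uV (g.fv w) = p.fv w := by
      intro w hw
      have hv : ∃ x, x ∈ L.nodes ∧ g.fv x = g.fv w := ⟨w, hw, rfl⟩
      have hsp := hv.choose_spec
      simp only [uV, dif_pos hv]
      rw [ginjV hsp.1 hw hsp.2]
    have huEg : ∀ w ∈ L.edges, uE (g.fe w) = p.fe w := by
      intro w hw
      have hv : ∃ x, x ∈ L.edges ∧ g.fe x = g.fe w := ⟨w, hw, rfl⟩
      have hsp := hv.choose_spec
      simp only [uE, dif_pos hv]
      rw [ginjE hsp.1 hw hsp.2]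
    have huVD : ∀ v, v ∈ G.nodes → v ∉ g.fv '' (L.nodes \ b'.fv '' K.nodes) →
        uV v = t.fv v := by
      intro v _ hvD
      by_cases hv : ∃ x, x ∈ L.nodes ∧ g.fv x = v
      · obtain ⟨hw, hgw⟩ := hv.choose_spec
        have hwK : hv.choose ∈ b'.fv '' K.nodes := by
          by_contra hnot
          exact hvD ⟨hv.choose, ⟨hw, hnot⟩, hgw⟩
        obtain ⟨k, hk, hbk⟩ := hwK
        simp only [uV, dif_pos hv]
        rw [← hbk, hcomV k hk]
        simp [PreMorph.comp, hbk, hgw]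
      · simp [uV, dif_neg hv]
    have huED : ∀ e, e ∈ G.edges → e ∉ g.fe '' (L.edges \ b'.fe '' K.edges) →
        uE e = t.fe e := by
      intro e _ heD
      by_cases he : ∃ x, x ∈ L.edges ∧ g.fe x = e
      · obtain ⟨hw, hgw⟩ := he.choose_spec
        have hwK : he.choose ∈ b'.fe '' K.edges := by
          by_contra hnot
          exact heD ⟨he.choose, ⟨hw, hnot⟩, hgw⟩
        obtain ⟨k, hk, hbk⟩ := hwK
        simp only [uE, dif_pos he]
        rw [← hbk, hcomE k hk]
        simp [PreMorph.comp, hbk, hgw]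
      · simp [uE, dif_neg he]
    have hDn : ∀ v, v ∈ G.nodes → v ∉ g.fv '' (L.nodes \ b'.fv '' K.nodes) →
        v ∈ (Deletion K L G b' g).nodes := fun v h1 h2 => ⟨h1, h2⟩
    have hDe : ∀ e, e ∈ G.edges → e ∉ g.fe '' (L.edges \ b'.fe '' K.edges) →
        e ∈ (Deletion K L G b' g).edges := fun e h1 h2 => ⟨h1, h2⟩
    constructor
    · refine ⟨⟨uV, uE⟩, ⟨?_, ?_, ?_, ?_, ?_, ?_⟩, ?_, ?_, ?_, ?_⟩
      · -- node_range
        intro v hvG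
        by_cases hv : ∃ x, x ∈ L.nodes ∧ g.fv x = v
        · obtain ⟨w, hw, rfl⟩ := hv
          show uV (g.fv w) ∈ H'.nodes
          rw [huVg w hw]; exact hp.node_range w hw
        · have hvD : v ∉ g.fv '' (L.nodes \ b'.fv '' K.nodes) := by
            rintro ⟨x, hx, hgx⟩; exact hv ⟨x, hx.1, hgx⟩
          show uV v ∈ H'.nodes
          rw [huVD v hvG hvD]
          exact ht.node_range v (hDn v hvG hvD)
      · -- edge_range
        intro e heG
        by_cases he : ∃ x, x ∈ L.edges ∧ g.fe x = e
        · obtain ⟨w, hw, rfl⟩ := he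
          show uE (g.fe w) ∈ H'.edges
          rw [huEg w hw]; exact hp.edge_range w hw
        · have heD : e ∉ g.fe '' (L.edges \ b'.fe '' K.edges) := by
            rintro ⟨x, hx, hgx⟩; exact he ⟨x, hx.1, hgx⟩
          show uE e ∈ H'.edges
          rw [huED e heG heD]
          exact ht.edge_range e (hDe e heG heD)
      · -- src_pres
        intro e heG
        by_cases he : ∃ x, x ∈ L.edges ∧ g.fe x = e
        · obtain ⟨w, hw, rfl⟩ := he
          show uV (G.src (g.fe w)) = H'.src (uE (g.fe w))
          rw [huEg w hw, ← gsrc w hw, huVg _ (hL.src_mem w hw)]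
          exact hp.src_pres w hw
        · have heL : e ∉ g.fe '' L.edges := by
            rintro ⟨x, hx, hgx⟩; exact he ⟨x, hx, hgx⟩
          have heD : e ∉ g.fe '' (L.edges \ b'.fe '' K.edges) := by
            rintro ⟨x, hx, hgx⟩; exact he ⟨x, hx.1, hgx⟩
          have hdg := hdang e ⟨heG, heL⟩
          show uV (G.src e) = H'.src (uE e)
          rw [huED e heG heD, huVD _ (hG.src_mem e heG) hdg.1]
          exact ht.src_pres e (hDe e heG heD)
      · -- tgt_pres
        intro e heG
        by_cases he : ∃ x, x ∈ L.edges ∧ g.fe x = e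
        · obtain ⟨w, hw, rfl⟩ := he
          show uV (G.tgt (g.fe w)) = H'.tgt (uE (g.fe w))
          rw [huEg w hw, ← gtgt w hw, huVg _ (hL.tgt_mem w hw)]
          exact hp.tgt_pres w hw
        · have heL : e ∉ g.fe '' L.edges := by
            rintro ⟨x, hx, hgx⟩; exact he ⟨x, hx, hgx⟩
          have heD : e ∉ g.fe '' (L.edges \ b'.fe '' K.edges) := by
            rintro ⟨x, hx, hgx⟩; exact he ⟨x, hx.1, hgx⟩
          have hdg := hdang e ⟨heG, heL⟩
          show uV (G.tgt e) = H'.tgt (uE e)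
          rw [huED e heG heD, huVD _ (hG.tgt_mem e heG) hdg.2]
          exact ht.tgt_pres e (hDe e heG heD)
      · -- labV_pres
        intro v hvG
        by_cases hv : ∃ x, x ∈ L.nodes ∧ g.fv x = v
        · obtain ⟨w, hw, rfl⟩ := hv
          show G.labV (g.fv w) = H'.labV (uV (g.fv w))
          rw [huVg w hw, ← glabV w hw]
          exact hp.labV_pres w hw
        · have hvD : v ∉ g.fv '' (L.nodes \ b'.fv '' K.nodes) := by
            rintro ⟨x, hx, hgx⟩; exact hv ⟨x, hx.1, hgx⟩
          show G.labV v = H'.labV (uV v)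
          rw [huVD v hvG hvD]
          exact ht.labV_pres v (hDn v hvG hvD)
      · -- labE_pres
        intro e heG
        by_cases he : ∃ x, x ∈ L.edges ∧ g.fe x = e
        · obtain ⟨w, hw, rfl⟩ := he
          show G.labE (g.fe w) = H'.labE (uE (g.fe w))
          rw [huEg w hw, ← glabE w hw]
          exact hp.labE_pres w hw
        · have heD : e ∉ g.fe '' (L.edges \ b'.fe '' K.edges) := by
            rintro ⟨x, hx, hgx⟩; exact he ⟨x, hx.1, hgx⟩
          show G.labE e = H'.labE (uE e)
          rw [huED e heG heD]
          exact ht.labE_pres e (hDe e heG heD)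
      · exact fun v hv => huVg v hv
      · exact fun e he => huEg e he
      · exact fun v hv => huVD v hv.1 hv.2
      · exact fun e he => huED e he.1 he.2
    · -- uniqueness
      rintro u u' ⟨_, h1, h2, h3, h4⟩ ⟨_, h1', h2', h3', h4'⟩
      constructor
      · intro v hvG
        by_cases hv : ∃ x, x ∈ L.nodes ∧ g.fv x = v
        · obtain ⟨w, hw, rfl⟩ := hv
          rw [h1 w hw, h1' w hw]
        · have hvD : v ∉ g.fv '' (L.nodes \ b'.fv '' K.nodes) := by
            rintro ⟨x, hx, hgx⟩; exact hv ⟨x, hx.1, hgx⟩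
          have := h3 v ⟨hvG, hvD⟩
          have := h3' v ⟨hvG, hvD⟩
          simp_all
      · intro e heG
        by_cases he : ∃ x, x ∈ L.edges ∧ g.fe x = e
        · obtain ⟨w, hw, rfl⟩ := he
          rw [h2 w hw, h2' w hw]
        · have heD : e ∉ g.fe '' (L.edges \ b'.fe '' K.edges) := by
            rintro ⟨x, hx, hgx⟩; exact he ⟨x, hx.1, hgx⟩
          have := h4 e ⟨heG, heD⟩
          have := h4' e ⟨heG, heD⟩
          simp_all
  · -- Square 2
    have hbKn : ∀ v, v ∈ b.fv '' K.nodes → v ∈ K.nodes := by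
      rintro v ⟨k, hk, rfl⟩; rw [hbV k hk]; exact hk
    have hbKe : ∀ e, e ∈ b.fe '' K.edges → e ∈ K.edges := by
      rintro e ⟨k, hk, rfl⟩; rw [hbE k hk]; exact hk
    refine ⟨?_, ?_, ?_⟩
    · intro v hv
      have hvimg : b.fv v ∈ b.fv '' K.nodes := ⟨v, hv, rfl⟩
      have : ¬ (b.fv v ∈ R.nodes \ b.fv '' K.nodes) := fun h => h.2 hvimg
      simp only [GluingH, GluingC, if_neg this, id_eq]
      rw [hbV v hv]
    · intro e he
      have heimg : b.fe e ∈ b.fe '' K.edges := ⟨e, he, rfl⟩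
      have : ¬ (b.fe e ∈ R.edges \ b.fe '' K.edges) := fun h => h.2 heimg
      simp only [GluingH, GluingC, if_neg this, id_eq]
      rw [hbE e he]
    · intro V' E' H' p t hH' hp ht hcomV hcomE
      constructor
      · refine ⟨⟨Sum.elim t.fv p.fv, Sum.elim t.fe p.fe⟩,
          ⟨?_, ?_, ?_, ?_, ?_, ?_⟩, ?_, ?_, ?_, ?_⟩
        · rintro v (⟨w, hw, rfl⟩ | ⟨w, hw, rfl⟩)
          · exact ht.node_range w hw
          · exact hp.node_range w hw.1
        · rintro e (⟨w, hw, rfl⟩ | ⟨w, hw, rfl⟩)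
          · exact ht.edge_range w hw
          · exact hp.edge_range w hw.1
        · -- src_pres
          rintro e (⟨w, hw, rfl⟩ | ⟨w, hw, rfl⟩)
          · exact ht.src_pres w hw
          · show Sum.elim t.fv p.fv ((Gluing K (Deletion K L G b' g) R b (g.comp b') id id).src (Sum.inr w)) = H'.src (p.fe w)
            by_cases hs : R.src w ∈ b.fv '' K.nodes
            · simp only [Gluing, if_pos hs, Sum.elim_inl]
              have hsK := hbKn _ hs
              rw [id_eq, ← hcomV _ hsK, hbV _ hsK]
              exact hp.src_pres w hw.1
            · simp only [Gluing, if_neg hs, Sum.elim_inr]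
              exact hp.src_pres w hw.1
        · -- tgt_pres
          rintro e (⟨w, hw, rfl⟩ | ⟨w, hw, rfl⟩)
          · exact ht.tgt_pres w hw
          · show Sum.elim t.fv p.fv ((Gluing K (Deletion K L G b' g) R b (g.comp b') id id).tgt (Sum.inr w)) = H'.tgt (p.fe w)
            by_cases hs : R.tgt w ∈ b.fv '' K.nodes
            · simp only [Gluing, if_pos hs, Sum.elim_inl]
              have hsK := hbKn _ hs
              rw [id_eq, ← hcomV _ hsK, hbV _ hsK]
              exact hp.tgt_pres w hw.1
            · simp only [Gluing, if_neg hs, Sum.elim_inr]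
              exact hp.tgt_pres w hw.1
        · rintro v (⟨w, hw, rfl⟩ | ⟨w, hw, rfl⟩)
          · exact ht.labV_pres w hw
          · exact hp.labV_pres w hw.1
        · rintro e (⟨w, hw, rfl⟩ | ⟨w, hw, rfl⟩)
          · exact ht.labE_pres w hw
          · exact hp.labE_pres w hw.1
        · -- u ∘ h = p on R nodes
          intro v hv
          by_cases hvK : v ∈ b.fv '' K.nodes
          · have : ¬ (v ∈ R.nodes \ b.fv '' K.nodes) := fun h => h.2 hvK
            simp only [GluingH, if_neg this, Sum.elim_inl, id_eq]
            have hvKn := hbKn v hvK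
            rw [← hcomV v hvKn, hbV v hvKn]
          · have : v ∈ R.nodes \ b.fv '' K.nodes := ⟨hv, hvK⟩
            simp only [GluingH, if_pos this, Sum.elim_inr]
        · -- u ∘ h = p on R edges
          intro e he
          by_cases heK : e ∈ b.fe '' K.edges
          · have : ¬ (e ∈ R.edges \ b.fe '' K.edges) := fun h => h.2 heK
            simp only [GluingH, if_neg this, Sum.elim_inl, id_eq]
            have heKe := hbKe e heK
            rw [← hcomE e heKe, hbE e heKe]
          · have : e ∈ R.edges \ b.fe '' K.edges := ⟨he, heK⟩
            simp only [GluingH, if_pos this, Sum.elim_inr]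
        · exact fun v _ => rfl
        · exact fun e _ => rfl
      · -- uniqueness
        rintro u u' ⟨_, h1, h2, h3, h4⟩ ⟨_, h1', h2', h3', h4'⟩
        constructor
        · rintro v (⟨w, hw, rfl⟩ | ⟨w, hw, rfl⟩)
          · rw [show (Sum.inl w : V ⊕ V) = (GluingC V E V E).fv w from rfl,
              h3 w hw, h3' w hw]
          · have hh : (GluingH K R b (g.comp b') id id).fv w = Sum.inr w := by
              simp only [GluingH, if_pos hw]
            rw [← hh, h1 w hw.1, h1' w hw.1]
        · rintro e (⟨w, hw, rfl⟩ | ⟨w, hw, rfl⟩)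
          · rw [show (Sum.inl w : E ⊕ E) = (GluingC V E V E).fe w from rfl,
              h4 w hw, h4' w hw]
          · have hh : (GluingH K R b (g.comp b') id id).fe w = Sum.inr w := by
              simp only [GluingH, if_pos hw]
            rw [← hh, h2 w hw.1, h2' w hw.1]
end
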